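/- arXiv:2105.12575 — 2 statements merged into one kernel-verified Lean document; each statement's English description precedes it below -/
import Mathlib

section
/- Assume v_0 < ... < v_g satisfy the Bresinsky conditions. Then the Apéry set of Γ\{0} is Ap(Γ\{0}) = {v_0} ∪ ({Σ_{i=1}^g s_i v_i : 0 ≤ s_i < n_i} \ {0}), it has exactly v_0 elements, and Γ\{0} is covered by its Apéry set, i.e. Γ\{0} = ⋃_{a ∈ Ap(Γ\{0})} (a + ℕ·v_0). -/
/-- The Apéry set of `S ⊆ ℕ` (w.r.t. `a₀ = min S`): the minimal element of `S`
in each residue class modulo `a₀` that meets `S`. -/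
noncomputable def apery (S : Set ℕ) : Set ℕ :=
  {a | a ∈ S ∧ ∀ b ∈ S, b % sInf S = a % sInf S → a ≤ b}

/-- `S` is covered by its Apéry set: `Ap(S)` has exactly `min S` elements and
`S = ⋃_{a ∈ Ap(S)} (a + ℕ·min S)`. -/
noncomputable def CoveredByApery (S : Set ℕ) : Prop :=
  (apery S).ncard = sInf S ∧
    S = {x | ∃ a ∈ apery S, ∃ k : ℕ, x = a + k * sInf S}

/-- The sequence `ε_i` computed from `S`:
`ε_0 = min S`, `ε_i = max{gcd(ε_{i-1}, a) : a ∈ Ap(S), ε_{i-1} ∤ a}`. -/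
noncomputable def eps (S : Set ℕ) : ℕ → ℕ
  | 0 => sInf S
  | i + 1 => sSup {d | ∃ a ∈ apery S, ¬ eps S i ∣ a ∧ d = Nat.gcd (eps S i) a}

/-- `η_0 = 1`, `η_i = ε_{i-1}/ε_i`. -/
noncomputable def eta (S : Set ℕ) : ℕ → ℕ
  | 0 => 1
  | i + 1 => eps S i / eps S (i + 1)

/-- The minimal index `ρ` with `ε_ρ = 1`. -/
noncomputable def rho (S : Set ℕ) : ℕ := sInf {i | eps S i = 1}

/-- The set of the `m` smallest elements of `T ⊆ ℕ`. -/
noncomputable def nSmallest (m : ℕ) (T : Set ℕ) : Set ℕ :=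
  {a | a ∈ T ∧ (T ∩ Set.Iio a).ncard < m}

/-- The sets `B_i(S)`: `B_0(S) = {min S}`, and for `i ≥ 1`, `B_i(S)` is the set of
the `ε_0/ε_{i-1}` smallest elements of `{a ∈ Ap(S) : ε_i ∣ a, ε_{i-1} ∤ a}`. -/
noncomputable def Bset (S : Set ℕ) : ℕ → Set ℕ
  | 0 => {sInf S}
  | i + 1 => nSmallest (eps S 0 / eps S i)
      {a | a ∈ apery S ∧ eps S (i + 1) ∣ a ∧ ¬ eps S i ∣ a}

/-- `e_i = gcd(v_0, …, v_i)`. -/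
def eseq (v : ℕ → ℕ) : ℕ → ℕ
  | 0 => v 0
  | i + 1 => Nat.gcd (eseq v i) (v (i + 1))

/-- `n_0 = 1`, `n_i = e_{i-1}/e_i`. -/
def nseq (v : ℕ → ℕ) : ℕ → ℕ
  | 0 => 1
  | i + 1 => eseq v i / eseq v (i + 1)

/-- The numerical semigroup generated by `v_0, …, v_g`. -/
def semigroupGen (g : ℕ) (v : ℕ → ℕ) : Set ℕ :=
  {x | ∃ c : ℕ → ℕ, x = ∑ i ∈ Finset.range (g + 1), c i * v i}

/-!
Writing `e_i = n_{i+1} e_{i+1}`, the digit sums `Σ_{j ≤ i} s_j v_j` with `0 ≤ s_j < n_j` have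
pairwise distinct residues modulo `v_0` and, when `e_i = 1`, realize every residue: digits are
peeled off from the top, since `v_{i+1} / e_{i+1}` is a unit modulo `n_{i+1}`. The Bresinsky
inequalities make every digit sum of level `i` smaller than `n_i v_i < v_{i+1}`, so
`n_{i+1} v_{i+1} ∈ ⟨v_0, …, v_i⟩`, and carrying shows that `Γ` is the set of digit sums plus
multiples of `v_0`. For such a set the Apéry set of `Γ \ {0}` is read off directly.
-/

lemma exists_lt_div_gcd_dvd_sub_mul {a b : ℕ} (ha : 0 < a) {m : ℤ}
    (hm : (Nat.gcd a b : ℤ) ∣ m) : ∃ r < a / Nat.gcd a b, (a : ℤ) ∣ m - r * b := by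
  obtain ⟨a', b', hco, ha', hb'⟩ := Nat.exists_coprime a b
  have hd : 0 < Nat.gcd a b := Nat.gcd_pos_of_pos_left b ha
  have ha'd : a / Nat.gcd a b = a' := Nat.div_eq_of_eq_mul_left hd ha'
  have ha'pos : (0 : ℤ) < a' := by exact_mod_cast Nat.pos_of_mul_pos_right (ha' ▸ ha)
  obtain ⟨x, y, hxy⟩ := Nat.isCoprime_iff_coprime.2 hco
  obtain ⟨c, rfl⟩ := hm
  -- with `c * y = a' * q + r` and Bezout `x a' + y b' = 1`: `c * gcd a b - r b = a (c x + q b')`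
  set r := c * y % a'
  set q := c * y / a'
  have hr0 : 0 ≤ r := Int.emod_nonneg _ ha'pos.ne'
  have hra' : r < a' := Int.emod_lt_of_pos _ ha'pos
  refine ⟨r.toNat, by rw [ha'd]; omega, c * x + q * b', ?_⟩
  have hqr : r + a' * q = c * y := Int.emod_add_mul_ediv _ _
  rw [Int.toNat_of_nonneg hr0]
  have ha'Z : (a : ℤ) = a' * Nat.gcd a b := by exact_mod_cast ha'
  have hb'Z : (b : ℤ) = b' * Nat.gcd a b := by exact_mod_cast hb'
  rw [ha'Z, hb'Z]
  linear_combination -(↑(Nat.gcd a b) * c) * hxy - ↑(Nat.gcd a b) * b' * hqr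

lemma eq_of_lt_div_gcd_of_dvd_sub_mul {a b r t : ℕ} (hr : r < a / Nat.gcd a b)
    (ht : t < a / Nat.gcd a b) (h : (a : ℤ) ∣ (r - t) * b) : r = t := by
  obtain ⟨a', b', hco, ha', hb'⟩ := Nat.exists_coprime a b
  have hd : 0 < Nat.gcd a b :=
    Nat.gcd_pos_of_pos_left b (Nat.pos_of_ne_zero fun h0 => by simp [h0] at hr)
  have ha'd : a / Nat.gcd a b = a' := Nat.div_eq_of_eq_mul_left hd ha'
  rw [ha'd] at hr ht
  have ha'Z : (a : ℤ) = a' * Nat.gcd a b := by exact_mod_cast ha'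
  have hb'Z : (b : ℤ) = b' * Nat.gcd a b := by exact_mod_cast hb'
  rw [ha'Z, hb'Z, ← mul_assoc] at h
  have hdvd : (a' : ℤ) ∣ r - t :=
    (Nat.isCoprime_iff_coprime.2 hco).dvd_of_dvd_mul_right
      (Int.dvd_of_mul_dvd_mul_right (by exact_mod_cast hd.ne') h)
  have := Int.eq_zero_of_abs_lt_dvd hdvd (by rw [abs_lt]; omega)
  omega

def addMultiples (A : Set ℕ) (m : ℕ) : Set ℕ :=
  {x | ∃ a ∈ A, ∃ k : ℕ, x = a + k * m}

section addMultiples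

variable {A : Set ℕ} {m : ℕ}

lemma addMultiples_diff_zero (h0 : 0 ∈ A) (hm : 0 < m) :
    addMultiples A m \ {0} = addMultiples (insert m (A \ {0})) m := by
  ext x
  constructor
  · rintro ⟨⟨a, ha, k, rfl⟩, hx⟩
    by_cases ha0 : a = 0
    · subst ha0
      obtain ⟨k, rfl⟩ : ∃ k', k = k' + 1 :=
        Nat.exists_eq_succ_of_ne_zero fun hk => hx (by simp [hk])
      exact ⟨m, Set.mem_insert _ _, k, by ring⟩
    · exact ⟨a, Set.mem_insert_of_mem _ ⟨ha, ha0⟩, k, rfl⟩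
  · rintro ⟨a, rfl | ⟨ha, ha0⟩, k, rfl⟩
    · exact ⟨⟨0, h0, k + 1, by ring⟩, by simp [hm.ne']⟩
    · exact ⟨⟨a, ha, k, rfl⟩, by simp_all⟩

lemma isLeast_addMultiples_diff_zero (h0 : 0 ∈ A) (hm : 0 < m)
    (hmin : ∀ a ∈ A, a ≠ 0 → m ≤ a) : IsLeast (addMultiples A m \ {0}) m := by
  refine ⟨⟨⟨0, h0, 1, by simp⟩, hm.ne'⟩, ?_⟩
  rintro _ ⟨⟨a, ha, k, rfl⟩, hx⟩
  by_cases ha0 : a = 0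
  · subst ha0
    have hk : 0 < k := Nat.pos_of_ne_zero fun hk => hx (by simp [hk])
    simpa using Nat.le_mul_of_pos_left m hk
  · exact (hmin a ha ha0).trans (Nat.le_add_right _ _)

lemma apery_addMultiples_diff_zero (h0 : 0 ∈ A) (hm : 0 < m)
    (hmin : ∀ a ∈ A, a ≠ 0 → m ≤ a) (hinj : Set.InjOn (· % m) A) :
    apery (addMultiples A m \ {0}) = insert m (A \ {0}) := by
  have hleast := isLeast_addMultiples_diff_zero h0 hm hmin
  have hA : ∀ a ∈ A, a ≠ 0 → a ∈ addMultiples A m \ {0} :=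
    fun a ha ha0 => ⟨⟨a, ha, 0, by simp⟩, ha0⟩
  ext x
  simp only [apery, hleast.csInf_eq, Set.mem_ofPred_eq]
  constructor
  · rintro ⟨hx, hxmin⟩
    obtain ⟨⟨a, ha, k, rfl⟩, -⟩ := id hx
    by_cases ha0 : a = 0
    · subst ha0
      exact Or.inl (le_antisymm (hxmin m hleast.1 (by simp)) (hleast.2 hx))
    · have hle := hxmin a (hA a ha ha0) (by simp)
      rw [le_antisymm hle (Nat.le_add_right a _)]
      exact Or.inr ⟨ha, ha0⟩
  · rintro (rfl | ⟨hx, hx0⟩)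
    · exact ⟨hleast.1, fun b hb _ => hleast.2 hb⟩
    · refine ⟨hA x hx hx0, ?_⟩
      rintro _ ⟨⟨a, ha, k, rfl⟩, -⟩ hmod
      rw [hinj ha hx (by simpa using hmod)]
      exact Nat.le_add_right _ _

lemma ncard_apery_addMultiples_diff_zero (h0 : 0 ∈ A) (hmin : ∀ a ∈ A, a ≠ 0 → m ≤ a)
    (hbij : Set.BijOn (· % m) A (Set.Iio m)) :
    (apery (addMultiples A m \ {0})).ncard = m := by
  have hm : 0 < m := by simpa using hbij.mapsTo h0
  have hA : A.ncard = m := by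
    rw [← hbij.injOn.ncard_image, hbij.image_eq, Set.ncard_Iio_nat]
  have hfin : A.Finite := Set.finite_of_ncard_pos (hA ▸ hm)
  have hmA : m ∉ A := fun h => hm.ne' (hbij.injOn h h0 (by simp))
  rw [apery_addMultiples_diff_zero h0 hm hmin hbij.injOn,
    Set.ncard_insert_of_notMem (fun h => hmA h.1) hfin.sdiff,
    Set.ncard_sdiff_singleton_add_one h0 hfin, hA]

lemma coveredByApery_addMultiples_diff_zero (h0 : 0 ∈ A) (hmin : ∀ a ∈ A, a ≠ 0 → m ≤ a)
    (hbij : Set.BijOn (· % m) A (Set.Iio m)) : CoveredByApery (addMultiples A m \ {0}) := by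
  have hm : 0 < m := by simpa using hbij.mapsTo h0
  rw [CoveredByApery, (isLeast_addMultiples_diff_zero h0 hm hmin).csInf_eq]
  refine ⟨ncard_apery_addMultiples_diff_zero h0 hmin hbij, ?_⟩
  rw [apery_addMultiples_diff_zero h0 hm hmin hbij.injOn]
  exact addMultiples_diff_zero h0 hm

end addMultiples

def digitSums (v : ℕ → ℕ) (i : ℕ) : Set ℕ :=
  {x | ∃ s : ℕ → ℕ, (∀ j, 1 ≤ j → j ≤ i → s j < nseq v j) ∧
    x = ∑ j ∈ Finset.Icc 1 i, s j * v j}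

section digits

variable {v : ℕ → ℕ}

lemma eseq_pos (hpos : 0 < v 0) : ∀ i, 0 < eseq v i
  | 0 => hpos
  | i + 1 => Nat.gcd_pos_of_pos_left _ (eseq_pos hpos i)

lemma eseq_dvd_of_le {i j : ℕ} (h : j ≤ i) : eseq v i ∣ v j := by
  induction i with
  | zero => rw [Nat.le_zero.mp h]; rfl
  | succ i ih =>
    rcases h.lt_or_eq with h | rfl
    · exact (Nat.gcd_dvd_left _ _).trans (ih (Nat.lt_succ_iff.mp h))
    · exact Nat.gcd_dvd_right _ _

lemma nseq_succ_mul_eseq_succ (i : ℕ) : nseq v (i + 1) * eseq v (i + 1) = eseq v i :=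
  Nat.div_mul_cancel (Nat.gcd_dvd_left _ _)

lemma nseq_pos (hpos : 0 < v 0) : ∀ i, 0 < nseq v i
  | 0 => Nat.one_pos
  | i + 1 => Nat.pos_of_mul_pos_right ((nseq_succ_mul_eseq_succ i).symm ▸ eseq_pos hpos i)

lemma zero_mem_digitSums (hpos : 0 < v 0) (i : ℕ) : 0 ∈ digitSums v i :=
  ⟨0, fun j _ _ => nseq_pos hpos j, by simp⟩

lemma digitSums_zero : digitSums v 0 = {0} := by
  ext x
  constructor
  · rintro ⟨s, -, rfl⟩
    simp
  · rintro rfl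
    exact ⟨0, by omega, by simp⟩

lemma mem_digitSums_succ {i x : ℕ} :
    x ∈ digitSums v (i + 1) ↔ ∃ a ∈ digitSums v i, ∃ r < nseq v (i + 1), x = a + r * v (i + 1) := by
  constructor
  · rintro ⟨s, hs, rfl⟩
    exact ⟨_, ⟨s, fun j hj1 hj2 => hs j hj1 (by omega), rfl⟩, s (i + 1), hs _ (by omega) le_rfl,
      Finset.sum_Icc_succ_top (by omega) _⟩
  · rintro ⟨_, ⟨s, hs, rfl⟩, r, hr, rfl⟩
    refine ⟨Function.update s (i + 1) r, fun j hj1 hj2 => ?_, ?_⟩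
    · rcases (Nat.lt_or_eq_of_le hj2) with hj | rfl
      · rw [Function.update_of_ne (by omega)]
        exact hs j hj1 (by omega)
      · simpa using hr
    · rw [Finset.sum_Icc_succ_top (by omega), Function.update_self]
      congr 1
      refine Finset.sum_congr rfl fun j hj => ?_
      rw [Function.update_of_ne (by simp at hj; omega)]

lemma eseq_dvd_of_mem_digitSums {i a : ℕ} (ha : a ∈ digitSums v i) : eseq v i ∣ a := by
  obtain ⟨s, -, rfl⟩ := ha
  exact Finset.dvd_sum fun j hj => (eseq_dvd_of_le (Finset.mem_Icc.mp hj).2).mul_left _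

end digits

section semigroupGen

variable {v : ℕ → ℕ}

lemma mem_semigroupGen_zero {x : ℕ} : x ∈ semigroupGen 0 v ↔ ∃ k, x = k * v 0 := by
  simp only [semigroupGen, zero_add, Finset.sum_range_one, Set.mem_ofPred_eq]
  exact ⟨fun ⟨c, h⟩ => ⟨c 0, h⟩, fun ⟨k, h⟩ => ⟨fun _ => k, h⟩⟩

lemma mem_semigroupGen_succ {i x : ℕ} :
    x ∈ semigroupGen (i + 1) v ↔ ∃ y ∈ semigroupGen i v, ∃ c, x = y + c * v (i + 1) := by
  constructor
  · rintro ⟨c, rfl⟩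
    exact ⟨_, ⟨c, rfl⟩, c (i + 1), Finset.sum_range_succ _ _⟩
  · rintro ⟨_, ⟨c, rfl⟩, r, rfl⟩
    refine ⟨Function.update c (i + 1) r, ?_⟩
    rw [Finset.sum_range_succ (fun j => Function.update c (i + 1) r j * v j), Function.update_self]
    congr 1
    refine Finset.sum_congr rfl fun j hj => ?_
    rw [Function.update_of_ne (by simp at hj; omega)]

lemma add_mem_semigroupGen {i x y : ℕ} (hx : x ∈ semigroupGen i v)
    (hy : y ∈ semigroupGen i v) : x + y ∈ semigroupGen i v := by
  obtain ⟨c, rfl⟩ := hx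
  obtain ⟨d, rfl⟩ := hy
  exact ⟨c + d, by simp [add_mul, Finset.sum_add_distrib]⟩

lemma mul_mem_semigroupGen {i x : ℕ} (k : ℕ) (hx : x ∈ semigroupGen i v) :
    k * x ∈ semigroupGen i v := by
  obtain ⟨c, rfl⟩ := hx
  exact ⟨k • c, by simp [Finset.mul_sum, mul_assoc]⟩

lemma addMultiples_digitSums_subset_semigroupGen (i : ℕ) :
    addMultiples (digitSums v i) (v 0) ⊆ semigroupGen i v := by
  induction i with
  | zero =>
    rintro _ ⟨a, ha, k, rfl⟩
    rw [digitSums_zero, Set.mem_singleton_iff] at ha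
    exact mem_semigroupGen_zero.2 ⟨k, by simp [ha]⟩
  | succ i ih =>
    rintro _ ⟨_, hsucc, k, rfl⟩
    obtain ⟨a, ha, r, -, rfl⟩ := mem_digitSums_succ.1 hsucc
    exact mem_semigroupGen_succ.2 ⟨a + k * v 0, ih ⟨a, ha, k, rfl⟩, r, by ring⟩

end semigroupGen

section residues

variable {v : ℕ → ℕ}

lemma exists_mem_digitSums_dvd_sub (hpos : 0 < v 0) (i : ℕ) (m : ℤ)
    (hm : (eseq v i : ℤ) ∣ m) : ∃ a ∈ digitSums v i, (v 0 : ℤ) ∣ m - a := by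
  induction i generalizing m with
  | zero => exact ⟨0, zero_mem_digitSums hpos 0, by rw [Nat.cast_zero, sub_zero]; exact hm⟩
  | succ i ih =>
    obtain ⟨r, hr, hdvd⟩ := exists_lt_div_gcd_dvd_sub_mul (eseq_pos hpos i) hm
    obtain ⟨a, ha, hdvd'⟩ := ih _ hdvd
    refine ⟨a + r * v (i + 1), mem_digitSums_succ.2 ⟨a, ha, r, hr, rfl⟩, ?_⟩
    push_cast
    rwa [sub_add_eq_sub_sub_swap]

lemma eq_of_mem_digitSums_of_dvd_sub {i a b : ℕ} (ha : a ∈ digitSums v i)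
    (hb : b ∈ digitSums v i) (hab : (v 0 : ℤ) ∣ a - b) : a = b := by
  induction i generalizing a b with
  | zero =>
    rw [digitSums_zero] at ha hb
    rw [ha, hb]
  | succ i ih =>
    obtain ⟨a, ha', r, hr, rfl⟩ := mem_digitSums_succ.1 ha
    obtain ⟨b, hb', t, ht, rfl⟩ := mem_digitSums_succ.1 hb
    -- everything except the top digits is divisible by `e_i`, which forces `r = t`
    have hdvd : (eseq v i : ℤ) ∣ (r - t) * v (i + 1) := by
      have hv0 : (eseq v i : ℤ) ∣ v 0 := by exact_mod_cast eseq_dvd_of_le (Nat.zero_le i)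
      have := dvd_sub (hv0.trans hab) (dvd_sub (Int.natCast_dvd_natCast.2
        (eseq_dvd_of_mem_digitSums ha')) (Int.natCast_dvd_natCast.2 (eseq_dvd_of_mem_digitSums hb')))
      rwa [show ((a + r * v (i + 1) : ℕ) : ℤ) - (b + t * v (i + 1) : ℕ) - (a - b)
        = (r - t) * v (i + 1) by push_cast; ring] at this
    obtain rfl := eq_of_lt_div_gcd_of_dvd_sub_mul hr ht hdvd
    rw [ih ha' hb' (by simpa using hab)]

lemma digitSums_mod_bijOn (hpos : 0 < v 0) {i : ℕ} (hgcd : eseq v i = 1) :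
    Set.BijOn (· % v 0) (digitSums v i) (Set.Iio (v 0)) := by
  refine ⟨fun a _ => Nat.mod_lt a hpos, fun a ha b hb hab => ?_, fun r hr => ?_⟩
  · exact eq_of_mem_digitSums_of_dvd_sub ha hb (Nat.ModEq.dvd hab.symm)
  · obtain ⟨a, ha, hdvd⟩ := exists_mem_digitSums_dvd_sub hpos i r (by simp [hgcd])
    exact ⟨a, ha, Eq.trans (Nat.modEq_iff_dvd.2 hdvd) (Nat.mod_eq_of_lt hr)⟩

end residues

section bresinsky

variable {v : ℕ → ℕ} (hpos : 0 < v 0)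
include hpos

lemma lt_nseq_mul_of_mem_digitSums {i a : ℕ}
    (hbre : ∀ j, 1 ≤ j → j ≤ i → nseq v (j - 1) * v (j - 1) < v j)
    (ha : a ∈ digitSums v i) : a < nseq v i * v i := by
  induction i generalizing a with
  | zero =>
    rw [digitSums_zero, Set.mem_singleton_iff] at ha
    simpa [ha, nseq] using hpos
  | succ i ih =>
    obtain ⟨a, ha', r, hr, rfl⟩ := mem_digitSums_succ.1 ha
    have hlt : a < v (i + 1) :=
      (ih (fun j hj1 hj2 => hbre j hj1 (by omega)) ha').trans (hbre (i + 1) (by omega) le_rfl)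
    calc a + r * v (i + 1) < (r + 1) * v (i + 1) := by linarith
      _ ≤ nseq v (i + 1) * v (i + 1) := Nat.mul_le_mul_right _ hr

lemma v_zero_le {i : ℕ} (hbre : ∀ j, 1 ≤ j → j ≤ i → nseq v (j - 1) * v (j - 1) < v j) :
    v 0 ≤ v i := by
  induction i with
  | zero => rfl
  | succ i ih =>
    calc v 0 ≤ v i := ih fun j hj1 hj2 => hbre j hj1 (by omega)
      _ ≤ nseq v i * v i := Nat.le_mul_of_pos_left _ (nseq_pos hpos i)
      _ ≤ v (i + 1) := (hbre (i + 1) (by omega) le_rfl).le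

lemma v_zero_le_of_mem_digitSums {i a : ℕ}
    (hbre : ∀ j, 1 ≤ j → j ≤ i → nseq v (j - 1) * v (j - 1) < v j)
    (ha : a ∈ digitSums v i) (ha0 : a ≠ 0) : v 0 ≤ a := by
  induction i generalizing a with
  | zero =>
    rw [digitSums_zero, Set.mem_singleton_iff] at ha
    exact absurd ha ha0
  | succ i ih =>
    obtain ⟨a, ha', r, -, rfl⟩ := mem_digitSums_succ.1 ha
    rcases Nat.eq_zero_or_pos r with rfl | hr
    · simpa using ih (fun j hj1 hj2 => hbre j hj1 (by omega)) ha' (by simpa using ha0)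
    · calc v 0 ≤ v (i + 1) := v_zero_le hpos hbre
        _ ≤ r * v (i + 1) := Nat.le_mul_of_pos_left _ hr
        _ ≤ a + r * v (i + 1) := Nat.le_add_left _ _

lemma nseq_succ_mul_mem_semigroupGen {i : ℕ}
    (hbre : ∀ j, 1 ≤ j → j ≤ i + 1 → nseq v (j - 1) * v (j - 1) < v j) :
    nseq v (i + 1) * v (i + 1) ∈ semigroupGen i v := by
  have he : eseq v i ∣ nseq v (i + 1) * v (i + 1) := by
    rw [← nseq_succ_mul_eseq_succ i]
    exact mul_dvd_mul_left _ (eseq_dvd_of_le le_rfl)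
  obtain ⟨a, ha, hdvd⟩ :=
    exists_mem_digitSums_dvd_sub hpos i _ (Int.natCast_dvd_natCast.2 he)
  -- the digit sum `a` is below `v (i + 1)`, so the multiple of `v 0` separating it is nonnegative
  have hle : a ≤ nseq v (i + 1) * v (i + 1) :=
    calc a ≤ v (i + 1) :=
          ((lt_nseq_mul_of_mem_digitSums hpos (fun j hj1 hj2 => hbre j hj1 (by omega)) ha).trans
            (hbre (i + 1) (by omega) le_rfl)).le
      _ ≤ nseq v (i + 1) * v (i + 1) := Nat.le_mul_of_pos_left _ (nseq_pos hpos _)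
  obtain ⟨k, hk⟩ := (Nat.modEq_iff_dvd' hle).1 (Nat.modEq_iff_dvd.2 hdvd)
  exact addMultiples_digitSums_subset_semigroupGen i
    ⟨a, ha, k, by rw [mul_comm k, ← hk, Nat.add_sub_cancel' hle]⟩

lemma semigroupGen_subset_addMultiples_digitSums {i : ℕ}
    (hbre : ∀ j, 1 ≤ j → j ≤ i → nseq v (j - 1) * v (j - 1) < v j) :
    semigroupGen i v ⊆ addMultiples (digitSums v i) (v 0) := by
  induction i with
  | zero =>
    intro x hx
    obtain ⟨k, rfl⟩ := mem_semigroupGen_zero.1 hx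
    exact ⟨0, zero_mem_digitSums hpos 0, k, (zero_add _).symm⟩
  | succ i ih =>
    intro x hx
    obtain ⟨y, hy, c, rfl⟩ := mem_semigroupGen_succ.1 hx
    set n := nseq v (i + 1)
    -- carry the multiples of `n` in the top digit down to level `i`
    obtain ⟨a, ha, k, hk⟩ := ih (fun j hj1 hj2 => hbre j hj1 (by omega))
      (add_mem_semigroupGen hy (mul_mem_semigroupGen (c / n)
        (nseq_succ_mul_mem_semigroupGen hpos hbre)))
    refine ⟨a + c % n * v (i + 1),
      mem_digitSums_succ.2 ⟨a, ha, _, Nat.mod_lt _ (nseq_pos hpos _), rfl⟩, k, ?_⟩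
    nth_rw 1 [← Nat.mod_add_div c n]
    linarith

lemma semigroupGen_eq_addMultiples_digitSums {i : ℕ}
    (hbre : ∀ j, 1 ≤ j → j ≤ i → nseq v (j - 1) * v (j - 1) < v j) :
    semigroupGen i v = addMultiples (digitSums v i) (v 0) :=
  (semigroupGen_subset_addMultiples_digitSums hpos hbre).antisymm
    (addMultiples_digitSums_subset_semigroupGen i)

end bresinsky

theorem apery_of_gamma_general (g : ℕ) (v : ℕ → ℕ) (hpos : 0 < v 0)
    (hgcd : eseq v g = 1)
    (hbre : ∀ i, 1 ≤ i → i ≤ g → 2 ≤ nseq v i ∧ nseq v (i - 1) * v (i - 1) < v i) :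
    apery (semigroupGen g v \ {0}) = insert (v 0)
        ({x | ∃ s : ℕ → ℕ, (∀ i, 1 ≤ i → i ≤ g → s i < nseq v i) ∧
            x = ∑ i ∈ Finset.Icc 1 g, s i * v i} \ {0}) ∧
      (apery (semigroupGen g v \ {0})).ncard = v 0 ∧
      CoveredByApery (semigroupGen g v \ {0}) := by
  have hbre' : ∀ j, 1 ≤ j → j ≤ g → nseq v (j - 1) * v (j - 1) < v j :=
    fun j hj1 hj2 => (hbre j hj1 hj2).2
  have h0 := zero_mem_digitSums hpos g
  have hmin : ∀ a ∈ digitSums v g, a ≠ 0 → v 0 ≤ a :=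
    fun _ ha ha0 => v_zero_le_of_mem_digitSums hpos hbre' ha ha0
  have hbij := digitSums_mod_bijOn hpos hgcd
  rw [semigroupGen_eq_addMultiples_digitSums hpos hbre']
  exact ⟨apery_addMultiples_diff_zero h0 hpos hmin hbij.injOn,
    ncard_apery_addMultiples_diff_zero h0 hmin hbij,
    coveredByApery_addMultiples_diff_zero h0 hmin hbij⟩

/-- For `v_0 < ⋯ < v_g` positive with `gcd = 1` satisfying the Bresinsky
conditions, the Apéry set of `Γ \ {0}` is
`{v_0} ∪ ({Σ_{i=1}^g s_i v_i : 0 ≤ s_i < n_i} \ {0})`, it has exactly `v_0`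
elements, and `Γ \ {0}` is covered by its Apéry set. -/
theorem apery_of_gamma (g : ℕ) (v : ℕ → ℕ) (hpos : 0 < v 0)
    (hmono : ∀ i j, i < j → j ≤ g → v i < v j) (hgcd : eseq v g = 1)
    (hbre : ∀ i, 1 ≤ i → i ≤ g → 2 ≤ nseq v i ∧ nseq v (i - 1) * v (i - 1) < v i) :
    apery (semigroupGen g v \ {0}) = insert (v 0)
        ({x | ∃ s : ℕ → ℕ, (∀ i, 1 ≤ i → i ≤ g → s i < nseq v i) ∧
            x = ∑ i ∈ Finset.Icc 1 g, s i * v i} \ {0}) ∧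
      (apery (semigroupGen g v \ {0})).ncard = v 0 ∧
      CoveredByApery (semigroupGen g v \ {0}) :=
  apery_of_gamma_general g v hpos hgcd hbre
end

section
/- Let C be a plane branch with value semigroup Γ_C minimally generated by v_0 < v_1 < ... < v_g (g ≥ 1). If Λ_C \ Γ_C ≠ ∅, then min(Λ_C \ Γ_C) > v_0 + v_1. -/
open PowerSeries

/-- Substitution of two power series (with zero constant term) into a
two-variable power series: `h(a, b)`. Valid (agrees with the analytic
substitution) whenever `a` and `b` have zero constant term. -/
noncomputable def subst2 (a b : PowerSeries ℂ) (h : MvPowerSeries (Fin 2) ℂ) :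
    PowerSeries ℂ :=
  PowerSeries.mk fun k =>
    ∑ i ∈ Finset.range (k + 1), ∑ j ∈ Finset.range (k + 1),
      MvPowerSeries.coeff (Finsupp.single 0 i + Finsupp.single 1 j) h *
        PowerSeries.coeff k (a ^ i * b ^ j)

/-- Formal derivative with respect to `t`. -/
noncomputable def dt (f : PowerSeries ℂ) : PowerSeries ℂ :=
  PowerSeries.mk fun k => (k + 1 : ℂ) * PowerSeries.coeff (k + 1) f

/-- A plane branch given by a primitive Puiseux parametrization
`φ(t) = (t^n, y(t))` with `n ≥ 1`, `y(t) = ∑_{i ≥ n} a_i t^i` and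
`gcd({n} ∪ {i : a_i ≠ 0}) = 1`. -/
structure PlaneBranch where
  n : ℕ
  y : PowerSeries ℂ
  one_le_n : 1 ≤ n
  coeff_vanish : ∀ i, PowerSeries.coeff i y ≠ 0 → n ≤ i
  primitive : ∀ d : ℕ, d ∣ n → (∀ i, PowerSeries.coeff i y ≠ 0 → d ∣ i) → d = 1

/-- `φ*(h) = h(t^n, y(t))`. -/
noncomputable def PlaneBranch.pull (C : PlaneBranch) (h : MvPowerSeries (Fin 2) ℂ) :
    PowerSeries ℂ :=
  subst2 (PowerSeries.X ^ C.n) C.y h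

/-- The value semigroup `Γ_C = {ord_t φ*(h) : h ∈ ℂ⟦x,y⟧, φ*(h) ≠ 0}`. -/
noncomputable def PlaneBranch.Gamma (C : PlaneBranch) : Set ℕ :=
  {d | ∃ h : MvPowerSeries (Fin 2) ℂ, C.pull h ≠ 0 ∧ (C.pull h).order = (d : ℕ∞)}

/-- `φ*(ω)` for the 1-form `ω = A dx + B dy`:
`φ*(ω) = φ*(A)·(t^n)' + φ*(B)·y'(t)`. -/
noncomputable def PlaneBranch.pullForm (C : PlaneBranch)
    (A B : MvPowerSeries (Fin 2) ℂ) : PowerSeries ℂ :=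
  C.pull A * dt (PowerSeries.X ^ C.n) + C.pull B * dt C.y

/-- The value set of 1-forms `Λ_C = {ord_t (t·φ*(ω)) : ω ∈ Ω¹, φ*(ω) ≠ 0}`. -/
noncomputable def PlaneBranch.Lambda (C : PlaneBranch) : Set ℕ :=
  {d | ∃ A B : MvPowerSeries (Fin 2) ℂ, C.pullForm A B ≠ 0 ∧
    (PowerSeries.X * C.pullForm A B).order = (d : ℕ∞)}

/-- `v_0 < v_1 < ⋯ < v_g` is a minimal system of generators of `Γ`. -/
def IsMinGen (Γ : Set ℕ) (g : ℕ) (v : ℕ → ℕ) : Prop :=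
  (∀ i j, i < j → j ≤ g → v i < v j) ∧ Γ = semigroupGen g v ∧
    ∀ j ≤ g, ∀ c : ℕ → ℕ, c j = 0 → v j ≠ ∑ i ∈ Finset.range (g + 1), c i * v i

/-!
The generator `v₀` is the multiplicity `n`, and `n ≥ 2` because `g ≥ 1`. The terms of `y(t)` of
order below the first exponent not divisible by `n` form a polynomial `p(tⁿ)`, so
`ỹ = φ*(y - p(x))` has an order `m ∈ Γ` with `n ∤ m`, whence `v₁ ≤ m`. Rewriting
`ω = (A + B p'(x)) dx + B d(y - p(x))` splits `t·φ*(ω)` into two terms of orders `α + n` and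
`β + m` with `α, β ∈ Γ`. If `ν(ω) ∉ Γ` these orders must cancel, so `α + n = β + m < ν(ω)`;
and `α < v₁` would force `n ∣ α`, hence `β = 0` and `n ∣ m`. Thus `v₀ + v₁ ≤ α + n < ν(ω)`.
-/

open Finset

namespace PowerSeries

variable {R : Type*}

theorem coeff_pow_mul_pow_eq_zero [CommSemiring R] {a b : R⟦X⟧}
    (ha : constantCoeff a = 0) (hb : constantCoeff b = 0) {i j k : ℕ} (hk : k < i + j) :
    coeff k (a ^ i * b ^ j) = 0 := by
  have hdvd : X ^ (i + j) ∣ a ^ i * b ^ j := by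
    rw [pow_add]
    exact mul_dvd_mul (pow_dvd_pow_of_dvd (X_dvd_iff.2 ha) i)
      (pow_dvd_pow_of_dvd (X_dvd_iff.2 hb) j)
  exact X_pow_dvd_iff.1 hdvd k hk

theorem order_eq_order_of_coeff_eq_zero_iff [Semiring R] {f g : R⟦X⟧}
    (h : ∀ k, coeff k f = 0 ↔ coeff k g = 0) : f.order = g.order :=
  le_antisymm (le_order _ _ fun i hi => (h i).1 (coeff_of_lt_order i hi))
    (le_order _ _ fun i hi => (h i).2 (coeff_of_lt_order i hi))

theorem coeff_X_mul_derivative [CommSemiring R] (f : R⟦X⟧) (k : ℕ) :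
    coeff k (X * d⁄dX R f) = coeff k f * k := by
  cases k with
  | zero => simp
  | succ k => simp [coeff_derivative]

theorem order_X_mul_derivative [CommRing R] [IsDomain R] [CharZero R] {f : R⟦X⟧}
    (hf : f.order ≠ 0) : (X * d⁄dX R f).order = f.order := by
  refine order_eq_order_of_coeff_eq_zero_iff fun k => ?_
  rcases eq_or_ne k 0 with rfl | hk
  · simp [coeff_X_mul_derivative, order_ne_zero_iff_constCoeff_eq_zero.1 hf]
  · simp [coeff_X_mul_derivative, hk]

section Straightening

variable [CommRing R]

theorem coe_expand_eq_aeval (n : ℕ) (p : Polynomial R) :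
    (Polynomial.expand R n p : R⟦X⟧) = Polynomial.aeval (X ^ n : R⟦X⟧) p := by
  have h := Polynomial.aeval_algHom_apply (Polynomial.coeToPowerSeries.algHom R)
    (Polynomial.X ^ n : Polynomial R) p
  rw [← Polynomial.expand_aeval, Polynomial.aeval_X_left_apply] at h
  simpa using h.symm

theorem expand_contract_trunc {n i₀ : ℕ} (hn : n ≠ 0) {y : R⟦X⟧}
    (hdvd : ∀ k < i₀, coeff k y ≠ 0 → n ∣ k) :
    Polynomial.expand R n (Polynomial.contract n (trunc i₀ y)) = trunc i₀ y := by
  ext k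
  rw [Polynomial.coeff_expand (Nat.pos_of_ne_zero hn), Polynomial.coeff_contract hn]
  split_ifs with hk
  · rw [Nat.div_mul_cancel hk]
  · rw [coeff_trunc]
    split_ifs with hki
    · exact (not_imp_comm.1 (hdvd k hki) hk).symm
    · rfl

theorem exists_order_sub_aeval_X_pow_not_dvd {n : ℕ} (hn : n ≠ 0) {y : R⟦X⟧}
    (hy : ∃ i, coeff i y ≠ 0 ∧ ¬ n ∣ i) :
    ∃ (q : Polynomial R) (m : ℕ), (y - Polynomial.aeval (X ^ n) q).order = (m : ℕ∞) ∧ ¬ n ∣ m := by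
  classical
  refine ⟨Polynomial.contract n (trunc (Nat.find hy) y), Nat.find hy, ?_, (Nat.find_spec hy).2⟩
  have hmin : ∀ k < Nat.find hy, coeff k y ≠ 0 → n ∣ k := fun k hk hky =>
    not_not.1 fun hnk => Nat.find_min hy hk ⟨hky, hnk⟩
  rw [← coe_expand_eq_aeval, expand_contract_trunc hn hmin, order_eq_nat]
  refine ⟨by simpa [coeff_trunc] using (Nat.find_spec hy).1, fun k hk => ?_⟩
  simp [coeff_trunc, hk]

end Straightening

section Cancellation

variable {Γ : Set ℕ}

theorem order_eq_and_lt_of_order_add_notMem [Semiring R] {F G : R⟦X⟧}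
    (hF : ∀ d : ℕ, F.order = d → d ∈ Γ) (hG : ∀ d : ℕ, G.order = d → d ∈ Γ)
    {l : ℕ} (hl : (F + G).order = l) (hlΓ : l ∉ Γ) : F.order = G.order ∧ F.order < l := by
  have hFG : F.order = G.order := by
    by_contra hne
    rw [order_add_of_order_ne F G hne] at hl
    rcases min_choice F.order G.order with h | h
    · exact hlΓ (hF l (h ▸ hl))
    · exact hlΓ (hG l (h ▸ hl))
  refine ⟨hFG, lt_of_le_of_ne ?_ fun h => hlΓ (hF l h)⟩
  simpa [hFG, ← hl] using min_order_le_order_add F G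

variable [CommRing R] [IsDomain R]

theorem order_mul_mem {f u : R⟦X⟧} (hΓ : ∀ a ∈ Γ, ∀ b ∈ Γ, a + b ∈ Γ)
    (hf : ∀ d : ℕ, f.order = d → d ∈ Γ) {a : ℕ} (hu : u.order = a) (ha : a ∈ Γ) :
    ∀ d : ℕ, (f * u).order = d → d ∈ Γ := by
  intro d hd
  rw [order_mul, hu] at hd
  obtain ⟨α, hα⟩ := ENat.ne_top_iff_exists.1 (show f.order ≠ ⊤ from fun h => by simp [h] at hd)
  rw [← hα, ← ENat.natCast_add, ENat.natCast_inj] at hd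
  exact hd ▸ hΓ α (hf α hα.symm) a ha

theorem exists_add_eq_of_order_add_notMem (hΓ : ∀ a ∈ Γ, ∀ b ∈ Γ, a + b ∈ Γ)
    {f g u w : R⟦X⟧} {a b l : ℕ} (hu : u.order = a) (hw : w.order = b) (ha : a ∈ Γ) (hb : b ∈ Γ)
    (hf : ∀ d : ℕ, f.order = d → d ∈ Γ) (hg : ∀ d : ℕ, g.order = d → d ∈ Γ)
    (hl : (f * u + g * w).order = l) (hlΓ : l ∉ Γ) :
    ∃ α ∈ Γ, ∃ β ∈ Γ, α + a = β + b ∧ α + a < l := by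
  obtain ⟨hFG, hlt⟩ := order_eq_and_lt_of_order_add_notMem (order_mul_mem hΓ hf hu ha)
    (order_mul_mem hΓ hg hw hb) hl hlΓ
  rw [order_mul, order_mul, hu, hw] at hFG
  rw [order_mul, hu] at hlt
  obtain ⟨α, hα⟩ := ENat.ne_top_iff_exists.1 (show f.order ≠ ⊤ from fun h => by simp [h] at hlt)
  obtain ⟨β, hβ⟩ := ENat.ne_top_iff_exists.1
    (show g.order ≠ ⊤ from fun h => by simp [h, ← hα] at hFG)
  rw [← hα, ← hβ] at hFG
  rw [← hα] at hlt
  exact ⟨α, hf α hα.symm, β, hg β hβ.symm, by exact_mod_cast hFG, by exact_mod_cast hlt⟩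

end Cancellation

end PowerSeries

theorem le_sum_mul_of_ne_zero {g : ℕ} {c v : ℕ → ℕ} {i : ℕ} (hi : i ≤ g) (hc : c i ≠ 0) :
    v i ≤ ∑ j ∈ range (g + 1), c j * v j :=
  (Nat.le_mul_of_pos_left _ (Nat.pos_of_ne_zero hc)).trans
    (single_le_sum (f := fun j => c j * v j) (fun _ _ => Nat.zero_le _)
      (mem_range.2 (Nat.lt_succ_of_le hi)))

namespace IsMinGen

variable {Γ : Set ℕ} {g : ℕ} {v : ℕ → ℕ}

theorem v_le_v_of_le (hmin : IsMinGen Γ g v) {i j : ℕ} (hij : i ≤ j) (hj : j ≤ g) : v i ≤ v j :=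
  hij.eq_or_lt.elim (fun h => h ▸ le_rfl) fun h => (hmin.1 i j h hj).le

theorem v_mem (hmin : IsMinGen Γ g v) {i : ℕ} (hi : i ≤ g) : v i ∈ Γ := by
  classical
  refine hmin.2.1 ▸ ⟨fun j => if j = i then 1 else 0, ?_⟩
  rw [sum_eq_single_of_mem i (mem_range.2 (Nat.lt_succ_of_le hi)) fun j _ hj => by simp [hj]]
  simp

theorem v_zero_ne_zero (hmin : IsMinGen Γ g v) : v 0 ≠ 0 :=
  fun h0 => hmin.2.2 0 (Nat.zero_le g) (fun _ => 0) rfl (by simp [h0])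

theorem v_zero_ne_one (hmin : IsMinGen Γ g v) (hg : 1 ≤ g) : v 0 ≠ 1 := by
  classical
  intro h1
  refine hmin.2.2 1 hg (fun j => if j = 0 then v 1 else 0) (by simp) ?_
  rw [sum_eq_single_of_mem 0 (mem_range.2 (Nat.succ_pos g)) fun j _ hj => by simp [hj]]
  simp [h1]

theorem v_zero_le (hmin : IsMinGen Γ g v) {x : ℕ} (hx : x ∈ Γ) (hx0 : x ≠ 0) : v 0 ≤ x := by
  obtain ⟨c, rfl⟩ := hmin.2.1 ▸ hx
  obtain ⟨i, hi, hci⟩ := exists_ne_zero_of_sum_ne_zero hx0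
  have hig : i ≤ g := Nat.lt_succ_iff.1 (mem_range.1 hi)
  exact (hmin.v_le_v_of_le (Nat.zero_le i) hig).trans
    (le_sum_mul_of_ne_zero hig (left_ne_zero_of_mul hci))

theorem dvd_or_le (hmin : IsMinGen Γ g v) {x : ℕ} (hx : x ∈ Γ) : v 0 ∣ x ∨ v 1 ≤ x := by
  obtain ⟨c, rfl⟩ := hmin.2.1 ▸ hx
  by_cases h : ∃ i, 1 ≤ i ∧ i ≤ g ∧ c i ≠ 0
  · obtain ⟨i, hi1, hig, hci⟩ := h
    exact .inr ((hmin.v_le_v_of_le hi1 hig).trans (le_sum_mul_of_ne_zero hig hci))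
  · push Not at h
    refine .inl ⟨c 0, ?_⟩
    rw [sum_eq_single_of_mem 0 (mem_range.2 (Nat.succ_pos g)) fun j hj hj0 => by
      rw [h j (Nat.pos_of_ne_zero hj0) (Nat.lt_succ_iff.1 (mem_range.1 hj)), zero_mul], mul_comm]

theorem v_zero_add_v_one_le (hmin : IsMinGen Γ g v) {α β m : ℕ}
    (hα : α ∈ Γ) (hβ : β ∈ Γ) (hm : m ∈ Γ) (hvm : ¬ v 0 ∣ m) (h : α + v 0 = β + m) :
    v 0 + v 1 ≤ α + v 0 := by
  have hm1 : v 1 ≤ m := (hmin.dvd_or_le hm).resolve_left hvm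
  by_contra! hlt
  have hvα : v 0 ∣ α := (hmin.dvd_or_le hα).resolve_right (by omega)
  have hβ0 : β = 0 := by_contra fun hβ0 => by have := hmin.v_zero_le hβ hβ0; omega
  exact hvm (show m = α + v 0 by omega ▸ dvd_add hvα dvd_rfl)

end IsMinGen

theorem Finsupp.single_zero_add_single_one {M : Type*} [AddCommMonoid M] (d : Fin 2 →₀ M) :
    Finsupp.single 0 (d 0) + Finsupp.single 1 (d 1) = d := by
  ext s
  fin_cases s <;> simp

theorem subst2_eq_subst {a b : ℂ⟦X⟧} (ha : constantCoeff a = 0) (hb : constantCoeff b = 0)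
    (h : MvPowerSeries (Fin 2) ℂ) : subst2 a b h = MvPowerSeries.subst ![a, b] h := by
  have hs : MvPowerSeries.HasSubst ![a, b] :=
    MvPowerSeries.hasSubst_of_constantCoeff_zero (Fin.forall_fin_two.2 ⟨ha, hb⟩)
  ext k
  rw [subst2, coeff_mk, coeff_def (s := Finsupp.single () k) (n := k) (by simp),
    MvPowerSeries.coeff_subst hs]
  have hprod (d : Fin 2 →₀ ℕ) : (d.prod fun s e => (![a, b] s) ^ e) = a ^ d 0 * b ^ d 1 := by
    rw [Finsupp.prod_fintype _ _ fun _ => pow_zero _, Fin.prod_univ_two]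
    rfl
  simp only [hprod, smul_eq_mul]
  let pair : ℕ × ℕ → (Fin 2 →₀ ℕ) := fun p => Finsupp.single 0 p.1 + Finsupp.single 1 p.2
  have hpair : Function.Injective pair := fun p q hpq => by
    simpa [pair, Prod.ext_iff] using
      And.intro (DFunLike.congr_fun hpq 0) (DFunLike.congr_fun hpq 1)
  rw [finsum_eq_sum_of_support_subset _ (s := (range (k + 1) ×ˢ range (k + 1)).image pair),
    sum_image fun p _ q _ hpq => hpair hpq, sum_product]
  · simp [pair]
  · intro d hd
    have hle : d 0 + d 1 ≤ k := by
      by_contra hlt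
      exact hd (by simp [← coeff_def (s := Finsupp.single () k) (n := k) (by simp),
        coeff_pow_mul_pow_eq_zero ha hb (not_le.1 hlt)])
    simp only [coe_image, coe_product, coe_range, Set.mem_image]
    exact ⟨(d 0, d 1), by simp; omega, Finsupp.single_zero_add_single_one d⟩

theorem dt_eq_derivative (f : ℂ⟦X⟧) : dt f = d⁄dX ℂ f := by
  ext k
  simp [dt, coeff_derivative, mul_comm]

namespace PlaneBranch

variable (C : PlaneBranch)

theorem n_ne_zero : C.n ≠ 0 :=
  Nat.one_le_iff_ne_zero.1 C.one_le_n

theorem constantCoeff_X_pow_n : constantCoeff (X ^ C.n : ℂ⟦X⟧) = 0 := by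
  simp [C.n_ne_zero]

theorem n_le_order_y : (C.n : ℕ∞) ≤ C.y.order :=
  le_order _ _ fun i hi => not_imp_comm.1 (C.coeff_vanish i) (by exact_mod_cast hi.not_ge)

theorem constantCoeff_y : constantCoeff C.y = 0 :=
  order_ne_zero_iff_constCoeff_eq_zero.1 fun h0 => C.n_ne_zero (by simpa [h0] using C.n_le_order_y)

theorem hasSubst : MvPowerSeries.HasSubst ![X ^ C.n, C.y] :=
  MvPowerSeries.hasSubst_of_constantCoeff_zero
    (Fin.forall_fin_two.2 ⟨C.constantCoeff_X_pow_n, C.constantCoeff_y⟩)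

noncomputable def pullAlgHom : MvPowerSeries (Fin 2) ℂ →ₐ[ℂ] ℂ⟦X⟧ :=
  MvPowerSeries.substAlgHom C.hasSubst

theorem coe_pullAlgHom : ⇑C.pullAlgHom = C.pull := by
  ext1 h
  rw [pullAlgHom, MvPowerSeries.coe_substAlgHom, pull,
    subst2_eq_subst C.constantCoeff_X_pow_n C.constantCoeff_y]

theorem pull_eq_subst (h : MvPowerSeries (Fin 2) ℂ) :
    C.pull h = MvPowerSeries.subst ![X ^ C.n, C.y] h := by
  rw [← coe_pullAlgHom, pullAlgHom, MvPowerSeries.coe_substAlgHom]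

theorem pull_X_zero : C.pull (MvPowerSeries.X 0) = X ^ C.n := by
  rw [pull_eq_subst, MvPowerSeries.subst_X C.hasSubst]
  rfl

theorem pull_X_one : C.pull (MvPowerSeries.X 1) = C.y := by
  rw [pull_eq_subst, MvPowerSeries.subst_X C.hasSubst]
  rfl

theorem pull_aeval_X_zero (q : Polynomial ℂ) :
    C.pull (Polynomial.aeval (MvPowerSeries.X 0) q) = Polynomial.aeval (X ^ C.n) q := by
  rw [← coe_pullAlgHom, ← Polynomial.aeval_algHom_apply, coe_pullAlgHom, pull_X_zero]

theorem pull_X_one_sub_aeval (q : Polynomial ℂ) :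
    C.pull (MvPowerSeries.X 1 - Polynomial.aeval (MvPowerSeries.X 0) q) =
      C.y - Polynomial.aeval (X ^ C.n) q := by
  rw [← coe_pullAlgHom, map_sub, coe_pullAlgHom, pull_X_one, pull_aeval_X_zero]

theorem constantCoeff_pull (h : MvPowerSeries (Fin 2) ℂ) :
    constantCoeff (C.pull h) = MvPowerSeries.constantCoeff h := by
  rw [← coeff_zero_eq_constantCoeff_apply, pull, subst2, coeff_mk]
  simp

theorem n_le_order_pull {h : MvPowerSeries (Fin 2) ℂ} (hh : MvPowerSeries.constantCoeff h = 0) :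
    (C.n : ℕ∞) ≤ (C.pull h).order := by
  rw [pull_eq_subst, order_eq_order]
  refine le_trans ?_ (MvPowerSeries.le_order_subst C.hasSubst h)
  have hgen : (C.n : ℕ∞) ≤ ⨅ i, MvPowerSeries.order (![X ^ C.n, C.y] i) :=
    le_iInf (Fin.forall_fin_two.2
      ⟨by simp [← order_eq_order, order_X_pow], by simpa [← order_eq_order] using C.n_le_order_y⟩)
  simpa using mul_le_mul' hgen (MvPowerSeries.one_le_order_iff_constCoeff_eq_zero.2 hh)

theorem mem_Gamma_of_order_pull_eq {h : MvPowerSeries (Fin 2) ℂ} {d : ℕ}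
    (hd : (C.pull h).order = d) : d ∈ C.Gamma :=
  ⟨h, fun h0 => by simp [h0] at hd, hd⟩

theorem n_mem_Gamma : C.n ∈ C.Gamma :=
  C.mem_Gamma_of_order_pull_eq (h := MvPowerSeries.X 0) (by rw [pull_X_zero, order_X_pow])

theorem add_mem_Gamma : ∀ a ∈ C.Gamma, ∀ b ∈ C.Gamma, a + b ∈ C.Gamma := by
  rintro a ⟨h, -, ha⟩ b ⟨h', -, hb⟩
  refine C.mem_Gamma_of_order_pull_eq (h := h * h') ?_
  rw [← coe_pullAlgHom, map_mul, order_mul, coe_pullAlgHom, ha, hb, ENat.natCast_add]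

theorem n_le_of_mem_Gamma {d : ℕ} (hd : d ∈ C.Gamma) (hd0 : d ≠ 0) : C.n ≤ d := by
  obtain ⟨h, -, hd⟩ := hd
  have h0 : MvPowerSeries.constantCoeff h = 0 := by
    rw [← C.constantCoeff_pull, ← coeff_zero_eq_constantCoeff_apply]
    exact coeff_of_lt_order 0 (by rw [hd]; exact_mod_cast Nat.pos_of_ne_zero hd0)
  exact_mod_cast hd ▸ C.n_le_order_pull h0

theorem v_zero_eq_n {g : ℕ} {v : ℕ → ℕ} (hmin : IsMinGen C.Gamma g v) : v 0 = C.n :=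
  le_antisymm (hmin.v_zero_le C.n_mem_Gamma C.n_ne_zero)
    (C.n_le_of_mem_Gamma (hmin.v_mem (Nat.zero_le g)) hmin.v_zero_ne_zero)

theorem exists_coeff_y_ne_zero_not_dvd (hn : C.n ≠ 1) : ∃ i, coeff i C.y ≠ 0 ∧ ¬ C.n ∣ i := by
  by_contra! h
  exact hn (C.primitive C.n dvd_rfl h)

theorem X_mul_pullForm (q : Polynomial ℂ) (A B : MvPowerSeries (Fin 2) ℂ) :
    X * C.pullForm A B =
      C.pull (A + B * Polynomial.aeval (MvPowerSeries.X 0) (Polynomial.derivative q)) *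
          (X * d⁄dX ℂ (X ^ C.n)) +
        C.pull B * (X * d⁄dX ℂ (C.y - Polynomial.aeval (X ^ C.n) q)) := by
  have hq := Derivation.map_aeval (d⁄dX ℂ) q (X ^ C.n : ℂ⟦X⟧)
  rw [pullForm, dt_eq_derivative, dt_eq_derivative, ← coe_pullAlgHom, map_add, map_mul,
    coe_pullAlgHom, pull_aeval_X_zero, map_sub, hq, smul_eq_mul]
  ring

end PlaneBranch

/-- For a plane branch `C` with minimal generators `v_0 < ⋯ < v_g` (`g ≥ 1`) of
`Γ_C`, if `Λ_C \ Γ_C ≠ ∅` then `min(Λ_C \ Γ_C) > v_0 + v_1`. -/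
theorem min_lambda_diff_gamma_gt (C : PlaneBranch) (g : ℕ) (v : ℕ → ℕ)
    (hmin : IsMinGen C.Gamma g v) (hg : 1 ≤ g)
    (hne : (C.Lambda \ C.Gamma).Nonempty) :
    v 0 + v 1 < sInf (C.Lambda \ C.Gamma) := by
  have hv0 : v 0 = C.n := C.v_zero_eq_n hmin
  obtain ⟨q, m, hm, hnm⟩ := exists_order_sub_aeval_X_pow_not_dvd C.n_ne_zero
    (C.exists_coeff_y_ne_zero_not_dvd (hv0 ▸ hmin.v_zero_ne_one hg))
  have hmΓ : m ∈ C.Gamma := C.mem_Gamma_of_order_pull_eq (by rwa [C.pull_X_one_sub_aeval])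
  have hn : (X * d⁄dX ℂ (X ^ C.n)).order = (C.n : ℕ∞) :=
    (order_X_mul_derivative (by simpa using C.n_ne_zero)).trans (order_X_pow _)
  have hm0 : m ≠ 0 := by
    rintro rfl
    exact hnm (dvd_zero _)
  have hm' : (X * d⁄dX ℂ (C.y - Polynomial.aeval (X ^ C.n) q)).order = (m : ℕ∞) :=
    (order_X_mul_derivative (by simpa [hm] using hm0)).trans hm
  obtain ⟨⟨A, B, -, hl⟩, hlΓ⟩ := Nat.sInf_mem hne
  rw [C.X_mul_pullForm q] at hl
  obtain ⟨α, hα, β, hβ, hαβ, hlt⟩ := exists_add_eq_of_order_add_notMem C.add_mem_Gamma hn hm'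
    C.n_mem_Gamma hmΓ (fun _ => C.mem_Gamma_of_order_pull_eq)
    (fun _ => C.mem_Gamma_of_order_pull_eq) hl hlΓ
  have := hmin.v_zero_add_v_one_le hα hβ hmΓ (hv0 ▸ hnm) (hv0 ▸ hαβ)
  omega
end
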